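/- Fix a positive integer ρ. There exists a unique real polynomial P_ρ such that (1−x)·P_ρ(x) = x(1 − (1 − (1−x)²)^ρ) for all real x; in particular the function f_ρ(x) := x(1 − (1 − (1−x)²)^ρ)/(1−x) (for x ≠ 1, with f_ρ(1) := 0) is a polynomial, hence smooth. Moreover there exists a unique x_ρ ∈ [0,1] with P_ρ′(x_ρ) = 0. -/

import Mathlib

/-!
Write `t = x(2 - x) = 1 - (1 - x)²`. Since `1 - t^ρ = (1 - x)² ∑_{k<ρ} t^k`, the polynomial
`P_ρ = x(1 - x) ∑_{k<ρ} t^k` works, and it is the only one because `1 - X` is not a zero divisor.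
Differentiating `(1 - X) P_ρ = X (1 - t^ρ)` and cancelling `1 - X` gives
`P_ρ' = ∑_{k<ρ} t^k - 2ρ x t^(ρ-1)`, which is `1` at `0` and `-ρ` at `1`, so it vanishes somewhere
in `[0, 1]`. A root `x` is positive and satisfies `∑_{k<ρ} t^k / (x t^(ρ-1)) = 2ρ`; the left side is
strictly decreasing on `(0, 1]` because `t` increases there, so the root is unique.
-/

open Polynomial Finset

lemma mul_pow_mul_pow_lt {x₁ x₂ t₁ t₂ : ℝ} {k m : ℕ} (hx₁ : 0 < x₁) (hx : x₁ < x₂)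
    (ht₁ : 0 < t₁) (ht : t₁ ≤ t₂) (hkm : k ≤ m) :
    x₁ * t₁ ^ m * t₂ ^ k < x₂ * t₂ ^ m * t₁ ^ k := by
  obtain ⟨j, rfl⟩ := Nat.exists_eq_add_of_le hkm
  have ht₂ : 0 < t₂ := ht₁.trans_le ht
  have hj : x₁ * t₁ ^ j < x₂ * t₂ ^ j :=
    mul_lt_mul hx (pow_le_pow_left₀ ht₁.le ht j) (by positivity) (hx₁.trans hx).le
  calc x₁ * t₁ ^ (k + j) * t₂ ^ k = (t₁ * t₂) ^ k * (x₁ * t₁ ^ j) := by ring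
    _ < (t₁ * t₂) ^ k * (x₂ * t₂ ^ j) := mul_lt_mul_of_pos_left hj (by positivity)
    _ = x₂ * t₂ ^ (k + j) * t₁ ^ k := by ring

lemma mul_pow_mul_geom_sum_lt {x₁ x₂ t₁ t₂ : ℝ} (m : ℕ) (hx₁ : 0 < x₁) (hx : x₁ < x₂)
    (ht₁ : 0 < t₁) (ht : t₁ ≤ t₂) :
    x₁ * t₁ ^ m * ∑ k ∈ range (m + 1), t₂ ^ k < x₂ * t₂ ^ m * ∑ k ∈ range (m + 1), t₁ ^ k := by
  simp_rw [mul_sum]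
  exact sum_lt_sum_of_nonempty nonempty_range_add_one fun k hk ↦
    mul_pow_mul_pow_lt hx₁ hx ht₁ ht (Nat.lt_succ_iff.mp (mem_range.mp hk))

lemma not_lt_of_geom_sum_eq_mul_pow {x₁ x₂ c : ℝ} (m : ℕ) (hx₁ : 0 < x₁) (hx₂ : x₂ ≤ 1)
    (h₁ : ∑ k ∈ range (m + 1), (x₁ * (2 - x₁)) ^ k = c * x₁ * (x₁ * (2 - x₁)) ^ m)
    (h₂ : ∑ k ∈ range (m + 1), (x₂ * (2 - x₂)) ^ k = c * x₂ * (x₂ * (2 - x₂)) ^ m) :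
    ¬ x₁ < x₂ := by
  intro hx
  have key := mul_pow_mul_geom_sum_lt m hx₁ hx (t₁ := x₁ * (2 - x₁)) (t₂ := x₂ * (2 - x₂))
    (by nlinarith) (by nlinarith)
  rw [h₁, h₂] at key
  exact key.ne (by ring)

noncomputable def retrySum (ρ : ℕ) : ℝ[X] := ∑ k ∈ range ρ, (X * (2 - X)) ^ k

noncomputable def retryPoly (ρ : ℕ) : ℝ[X] := X * (1 - X) * retrySum ρ

lemma one_sub_X_ne_zero : (1 - X : ℝ[X]) ≠ 0 := fun h ↦ by
  simpa using congrArg (eval 0) h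

lemma one_sub_X_mul_retryPoly (ρ : ℕ) :
    (1 - X) * retryPoly ρ = X * (1 - (1 - (1 - X) ^ 2) ^ ρ) := by
  have h := mul_neg_geom_sum (X * (2 - X) : ℝ[X]) ρ
  rw [retryPoly, retrySum, show (1 - (1 - X) ^ 2 : ℝ[X]) = X * (2 - X) by ring]
  linear_combination X * h

lemma derivative_retryPoly (ρ : ℕ) :
    derivative (retryPoly ρ) = retrySum ρ - 2 * (ρ : ℝ[X]) * X * (X * (2 - X)) ^ (ρ - 1) := by
  have h := congrArg derivative (one_sub_X_mul_retryPoly ρ)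
  simp only [derivative_mul, derivative_sub, derivative_one, derivative_X, derivative_pow] at h
  refine mul_left_cancel₀ one_sub_X_ne_zero ?_
  have hg := mul_neg_geom_sum (X * (2 - X) : ℝ[X]) ρ
  rw [retryPoly, retrySum] at h ⊢
  rw [show (1 - (1 - X) ^ 2 : ℝ[X]) = X * (2 - X) by ring] at h
  simp only [map_natCast, Nat.cast_ofNat, map_ofNat] at h
  linear_combination h - hg

lemma eval_one_sub_mul_retryPoly (ρ : ℕ) (x : ℝ) :
    (1 - x) * (retryPoly ρ).eval x = x * (1 - (1 - (1 - x) ^ 2) ^ ρ) := by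
  simpa using congrArg (eval x) (one_sub_X_mul_retryPoly ρ)

lemma eq_retryPoly_of_forall_eval {ρ : ℕ} {P : ℝ[X]}
    (hP : ∀ x : ℝ, (1 - x) * P.eval x = x * (1 - (1 - (1 - x) ^ 2) ^ ρ)) : P = retryPoly ρ :=
  mul_left_cancel₀ one_sub_X_ne_zero <| Polynomial.funext fun x ↦ by
    simp only [eval_mul, eval_sub, eval_one, eval_X, hP, eval_one_sub_mul_retryPoly]

lemma eval_derivative_retryPoly_succ (m : ℕ) (x : ℝ) :
    (derivative (retryPoly (m + 1))).eval x =
      ∑ k ∈ range (m + 1), (x * (2 - x)) ^ k - 2 * (m + 1) * x * (x * (2 - x)) ^ m := by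
  simp [derivative_retryPoly, retrySum, eval_finsetSum]

lemma existsUnique_root_derivative_retryPoly_succ (m : ℕ) :
    ∃! x : ℝ, x ∈ Set.Icc 0 1 ∧ (derivative (retryPoly (m + 1))).eval x = 0 := by
  set D := derivative (retryPoly (m + 1))
  have hD₀ : D.eval 0 = 1 := by simp [D, eval_derivative_retryPoly_succ, sum_range_succ']
  have hD₁ : D.eval 1 = -(m + 1) := by norm_num [D, eval_derivative_retryPoly_succ]; ring
  obtain ⟨c, hc, hDc⟩ := intermediate_value_Icc' zero_le_one D.continuous.continuousOn
    (show (0 : ℝ) ∈ Set.Icc (D.eval 1) (D.eval 0) by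
      rw [hD₀, hD₁]; constructor <;> linarith [(m.cast_nonneg : (0 : ℝ) ≤ m)])
  have hroot : ∀ x ∈ Set.Icc (0 : ℝ) 1, D.eval x = 0 → 0 < x ∧
      ∑ k ∈ range (m + 1), (x * (2 - x)) ^ k = 2 * (m + 1) * x * (x * (2 - x)) ^ m := by
    rintro x ⟨hx₀, -⟩ hx
    refine ⟨hx₀.lt_of_ne ?_, ?_⟩
    · rintro rfl
      simp [hD₀] at hx
    · rw [eval_derivative_retryPoly_succ] at hx
      linarith
  refine ⟨c, ⟨hc, hDc⟩, fun y ⟨hy, hDy⟩ ↦ ?_⟩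
  obtain ⟨hy₀, ey⟩ := hroot y hy hDy
  obtain ⟨hc₀, ec⟩ := hroot c hc hDc
  exact le_antisymm (not_lt.mp (not_lt_of_geom_sum_eq_mul_pow m hc₀ hy.2 ec ey))
    (not_lt.mp (not_lt_of_geom_sum_eq_mul_pow m hy₀ hc.2 ey ec))

theorem retry_rate_polynomial_and_unique_stationary_point (ρ : ℕ) (hρ : 1 ≤ ρ) :
    (∃! P : Polynomial ℝ, ∀ x : ℝ,
        (1 - x) * P.eval x = x * (1 - (1 - (1 - x) ^ 2) ^ ρ)) ∧
    ∀ P : Polynomial ℝ,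
      (∀ x : ℝ, (1 - x) * P.eval x = x * (1 - (1 - (1 - x) ^ 2) ^ ρ)) →
      ∃! x : ℝ, x ∈ Set.Icc (0:ℝ) 1 ∧ (Polynomial.derivative P).eval x = 0 := by
  refine ⟨⟨retryPoly ρ, eval_one_sub_mul_retryPoly ρ, fun _ ↦ eq_retryPoly_of_forall_eval⟩,
    fun P hP ↦ ?_⟩
  obtain ⟨m, rfl⟩ := Nat.exists_eq_add_of_le' hρ
  rw [eq_retryPoly_of_forall_eval hP]
  exact existsUnique_root_derivative_retryPoly_succ m
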